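/- In the group B₁₃ presented by ⟨a,b,c | bcab = cabc, abcab = cabca⟩, the element Δ = (abc)³ is central. -/

import Mathlib

/-!
Put `x = cabc`. The first relation rewrites `x` as `bcab`, so the second one says
`a x = abcab = cabca = x a`. Hence, with `y = abcab = x a`, both `Δ = (abc)³ = y x` and its
cyclic rotation `(cab)³ = x y` equal `x a x`, which commutes with `a`. In any monoid
`c (abc)ⁿ = (cab)ⁿ c` and `ab (cab)ⁿ = (abc)ⁿ ab`, so `(cab)³ = Δ` makes `Δ` commute with `c`
and with `ab`, hence with `b`.
-/

/-- Relations of the braid group of `G₁₃`: `⟨a,b,c | bcab = cabc, abcab = cabca⟩`,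
with generators indexed `0 ↦ a`, `1 ↦ b`, `2 ↦ c`. -/
def B13Rels : Set (FreeGroup (Fin 3)) :=
  let a := FreeGroup.of (0 : Fin 3)
  let b := FreeGroup.of (1 : Fin 3)
  let c := FreeGroup.of (2 : Fin 3)
  {b * c * a * b * (c * a * b * c)⁻¹, a * b * c * a * b * (c * a * b * c * a)⁻¹}

section Monoid

variable {M : Type*} [Monoid M]

theorem semiconjBy_pow_rotate (a b c : M) (n : ℕ) :
    SemiconjBy c ((a * b * c) ^ n) ((c * a * b) ^ n) :=
  SemiconjBy.pow_right (by simp only [SemiconjBy, mul_assoc]) n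

theorem semiconjBy_mul_pow_rotate (a b c : M) (n : ℕ) :
    SemiconjBy (a * b) ((c * a * b) ^ n) ((a * b * c) ^ n) :=
  SemiconjBy.pow_right (by simp only [SemiconjBy, mul_assoc]) n

theorem commute_pow_of_pow_rotate_eq {a b c : M} {n : ℕ}
    (h : (c * a * b) ^ n = (a * b * c) ^ n) :
    Commute c ((a * b * c) ^ n) ∧ Commute (a * b) ((a * b * c) ^ n) :=
  ⟨h ▸ semiconjBy_pow_rotate a b c n, h ▸ semiconjBy_mul_pow_rotate a b c n⟩

end Monoid

section BraidRelations

variable {G : Type*} [Group G] {a b c : G}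

theorem pow_three_eq_of_g13_relations (h₂ : a * b * c * a * b = c * a * b * c * a) :
    (a * b * c) ^ 3 = c * a * b * c * a * (c * a * b * c) := by
  rw [← h₂]; simp only [pow_succ, pow_zero, one_mul, mul_assoc]

variable (h₁ : b * c * a * b = c * a * b * c) (h₂ : a * b * c * a * b = c * a * b * c * a)
include h₁ h₂

theorem commute_of_g13_relations : Commute a (c * a * b * c) := by
  calc a * (c * a * b * c) = a * b * c * a * b := by rw [← h₁]; simp only [mul_assoc]
    _ = c * a * b * c * a := h₂

theorem pow_three_rotate_eq_of_g13_relations : (c * a * b) ^ 3 = (a * b * c) ^ 3 := by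
  have hx := commute_of_g13_relations h₁ h₂
  calc (c * a * b) ^ 3 = c * a * b * c * (a * b * c * a * b) := by
        simp only [pow_succ, pow_zero, one_mul, mul_assoc]
    _ = c * a * b * c * (c * a * b * c * a) := by rw [h₂]
    _ = c * a * b * c * a * (c * a * b * c) := by
        rw [mul_assoc (c * a * b * c) a, hx.eq]
    _ = (a * b * c) ^ 3 := (pow_three_eq_of_g13_relations h₂).symm

theorem commute_pow_three_of_g13_relations :
    Commute ((a * b * c) ^ 3) a ∧ Commute ((a * b * c) ^ 3) b ∧ Commute ((a * b * c) ^ 3) c := by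
  have hx := commute_of_g13_relations h₁ h₂
  obtain ⟨hc, hab⟩ := commute_pow_of_pow_rotate_eq (pow_three_rotate_eq_of_g13_relations h₁ h₂)
  have ha : Commute a ((a * b * c) ^ 3) := by
    rw [pow_three_eq_of_g13_relations h₂, ← hx.eq]
    exact ((Commute.refl a).mul_right hx).mul_right hx
  have hb : Commute (a⁻¹ * (a * b)) ((a * b * c) ^ 3) := ha.inv_left.mul_left hab
  rw [inv_mul_cancel_left] at hb
  exact ⟨ha.symm, hb.symm, hc.symm⟩

end BraidRelations

/-- In `B₁₃`, the element `Δ = (abc)³` is central. -/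
theorem stmt_15 :
    let a := PresentedGroup.of (rels := B13Rels) (0 : Fin 3)
    let b := PresentedGroup.of (rels := B13Rels) (1 : Fin 3)
    let c := PresentedGroup.of (rels := B13Rels) (2 : Fin 3)
    let Δ := (a * b * c) ^ 3
    Δ * a = a * Δ ∧ Δ * b = b * Δ ∧ Δ * c = c * Δ := by
  intro a b c Δ
  have h₁ : b * c * a * b = c * a * b * c :=
    PresentedGroup.mk_eq_mk_of_mul_inv_mem (Set.mem_insert _ _)
  have h₂ : a * b * c * a * b = c * a * b * c * a :=
    PresentedGroup.mk_eq_mk_of_mul_inv_mem (Set.mem_insert_of_mem _ rfl)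
  exact commute_pow_three_of_g13_relations h₁ h₂
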